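/- Fix d ≥ 1. For every y ∈ ℝ^d, the Capra conjugate of the ℓ0 pseudonorm satisfies sup_{x ∈ ℝ^d} ( ¢(x,y) − ℓ0(x) ) = max_{l ∈ {0,1,…,d}} ( ‖y‖_(l) − l ). -/

import Mathlib

noncomputable section

variable {d : ℕ}

/-- The projection `x_K` of `x` onto the coordinates in `K`
(the components outside `K` vanish). -/
def restr (K : Finset (Fin d)) (x : EuclideanSpace ℝ (Fin d)) : EuclideanSpace ℝ (Fin d) :=
  WithLp.toLp 2 (fun i => if i ∈ K then x i else 0)

/-- The 2-k-symmetric gauge norm `‖y‖_(k) = sup {‖y_K‖ : |K| ≤ k}`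
(equal to `0` for `k = 0`, by the convention `‖·‖_(0) = 0`). -/
def gaugeNorm (k : ℕ) (y : EuclideanSpace ℝ (Fin d)) : ℝ :=
  ⨆ K : {K : Finset (Fin d) // K.card ≤ k}, ‖restr (K : Finset (Fin d)) y‖

/-- The ℓ₀ pseudonorm: the number of nonzero components. -/
def l0 (x : EuclideanSpace ℝ (Fin d)) : ℕ :=
  (Finset.univ.filter fun i => x i ≠ 0).card

open Classical in
/-- The Capra coupling `¢(x,y) = ⟨x,y⟩ / ‖x‖` for `x ≠ 0`, and `¢(0,y) = 0`. -/
def capra (x y : EuclideanSpace ℝ (Fin d)) : ℝ :=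
  if x = 0 then 0 else (inner ℝ x y : ℝ) / ‖x‖

/-- The Capra conjugate of ℓ₀: `y ↦ max_{0 ≤ l ≤ d} (‖y‖_(l) − l)`. -/
def capraConjL0 (y : EuclideanSpace ℝ (Fin d)) : ℝ :=
  ⨆ l : Fin (d + 1), (gaugeNorm (l : ℕ) y - ((l : ℕ) : ℝ))

/-- `L₀(x) = sup_y (⟨x,y⟩ − max_{0 ≤ l ≤ d}(‖y‖_(l) − l))`, with values in `ℝ̄ = EReal`. -/
def L0 (x : EuclideanSpace ℝ (Fin d)) : EReal :=
  ⨆ y : EuclideanSpace ℝ (Fin d), (((inner ℝ x y : ℝ) - capraConjL0 y : ℝ) : EReal)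

/-- The k-support norm: the dual norm of the 2-k-symmetric gauge norm,
`‖y‖^sp_(k) = sup {⟨x,y⟩ : ‖x‖_(k) ≤ 1}`. -/
def suppNorm (k : ℕ) (y : EuclideanSpace ℝ (Fin d)) : ℝ :=
  sSup {c : ℝ | ∃ x : EuclideanSpace ℝ (Fin d), gaugeNorm k x ≤ 1 ∧ c = (inner ℝ x y : ℝ)}

/-- The unit ball of the k-support norm, with the convention `B^sp_(0) = {0}`. -/
def Bsp (d k : ℕ) : Set (EuclideanSpace ℝ (Fin d)) :=
  if k = 0 then {0} else {y | suppNorm k y ≤ 1}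

/-- The degenerate unit sphere `S_K = {x : x_{−K} = 0 and ‖x_K‖ = 1}`. -/
def sphK (K : Finset (Fin d)) : Set (EuclideanSpace ℝ (Fin d)) :=
  {x | (∀ i, i ∉ K → x i = 0) ∧ ‖restr K x‖ = 1}

/-- The degenerate unit ball `B_K = {x : x_{−K} = 0 and ‖x_K‖ ≤ 1}`. -/
def ballK (K : Finset (Fin d)) : Set (EuclideanSpace ℝ (Fin d)) :=
  {x | (∀ i, i ∉ K → x i = 0) ∧ ‖restr K x‖ ≤ 1}

/-! For `x ≠ 0` with support `K`, Cauchy–Schwarz gives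
`¢(x, y) = ⟨x, y_K⟩ / ‖x‖ ≤ ‖y_K‖ ≤ ‖y‖_(ℓ₀(x))`, so every term of the left-hand
supremum is dominated by the term `l = ℓ₀(x)` on the right. Conversely `x = y_K`
attains `¢(y_K, y) = ‖y_K‖` with `ℓ₀(y_K) ≤ |K|`, so each `‖y‖_(l) − l` is
dominated by a term on the left. -/

section Restr

variable (K : Finset (Fin d)) (x y : EuclideanSpace ℝ (Fin d))

lemma inner_restr_left_eq_inner_restr_restr :
    inner ℝ (restr K x) y = inner ℝ (restr K x) (restr K y) := by
  simp only [PiLp.inner_apply, RCLike.inner_apply, conj_trivial, restr]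
  refine Finset.sum_congr rfl fun i _ => ?_
  by_cases h : i ∈ K <;> simp [h]

lemma restr_support_self : restr (Finset.univ.filter fun i => x i ≠ 0) x = x := by
  ext i
  by_cases h : x i = 0 <;> simp [restr, h]

lemma l0_restr_le_card : l0 (restr K y) ≤ K.card := by
  refine Finset.card_le_card fun i hi => ?_
  simp only [Finset.mem_filter, restr, ne_eq] at hi
  by_contra h
  exact hi.2 (if_neg h)

lemma l0_le : l0 x ≤ d :=
  (Finset.card_le_univ _).trans_eq (Fintype.card_fin d)

end Restr

section GaugeNorm

variable {k : ℕ} (y : EuclideanSpace ℝ (Fin d))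

lemma norm_restr_le_gaugeNorm {K : Finset (Fin d)} (hK : K.card ≤ k) :
    ‖restr K y‖ ≤ gaugeNorm k y :=
  le_ciSup (f := fun K : {K : Finset (Fin d) // K.card ≤ k} => ‖restr K.1 y‖)
    (Set.finite_range _).bddAbove ⟨K, hK⟩

lemma gaugeNorm_nonneg : 0 ≤ gaugeNorm k y :=
  (norm_nonneg _).trans (norm_restr_le_gaugeNorm y (K := ∅) (by simp))

lemma gaugeNorm_le {c : ℝ} (h : ∀ K : Finset (Fin d), K.card ≤ k → ‖restr K y‖ ≤ c) :
    gaugeNorm k y ≤ c :=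
  have : Nonempty {K : Finset (Fin d) // K.card ≤ k} := ⟨⟨∅, by simp⟩⟩
  ciSup_le fun K => h K K.2

end GaugeNorm

section Capra

variable (x y : EuclideanSpace ℝ (Fin d))

lemma capra_le_norm : capra x y ≤ ‖y‖ := by
  by_cases hx : x = 0
  · simp [capra, hx]
  · rw [capra, if_neg hx, div_le_iff₀ (norm_pos_iff.mpr hx), mul_comm]
    exact real_inner_le_norm x y

lemma capra_le_gaugeNorm_l0 : capra x y ≤ gaugeNorm (l0 x) y := by
  by_cases hx : x = 0
  · simpa [capra, hx] using gaugeNorm_nonneg y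
  set K := Finset.univ.filter fun i => x i ≠ 0
  refine le_trans ?_ (norm_restr_le_gaugeNorm y (le_refl K.card))
  rw [capra, if_neg hx, div_le_iff₀ (norm_pos_iff.mpr hx)]
  calc inner ℝ x y = inner ℝ (restr K x) y := by rw [restr_support_self]
    _ = inner ℝ (restr K x) (restr K y) := inner_restr_left_eq_inner_restr_restr K x y
    _ = inner ℝ x (restr K y) := by rw [restr_support_self]
    _ ≤ ‖x‖ * ‖restr K y‖ := real_inner_le_norm _ _
    _ = ‖restr K y‖ * ‖x‖ := mul_comm _ _

lemma capra_restr_self (K : Finset (Fin d)) : capra (restr K y) y = ‖restr K y‖ := by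
  by_cases hz : restr K y = 0
  · simp [capra, hz]
  · rw [capra, if_neg hz, inner_restr_left_eq_inner_restr_restr,
      real_inner_self_eq_norm_mul_norm, mul_div_assoc, div_self (norm_ne_zero_iff.mpr hz),
      mul_one]

end Capra

theorem capra_conjugate_l0_general (d : ℕ) (y : EuclideanSpace ℝ (Fin d)) :
    (⨆ x : EuclideanSpace ℝ (Fin d), (capra x y - (l0 x : ℝ))) =
      ⨆ l : Fin (d + 1), (gaugeNorm (l : ℕ) y - ((l : ℕ) : ℝ)) := by
  have hlhs : BddAbove (Set.range fun x => capra x y - (l0 x : ℝ)) :=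
    ⟨‖y‖, Set.forall_mem_range.2 fun x => by
      linarith [capra_le_norm x y, (Nat.cast_nonneg (l0 x) : (0 : ℝ) ≤ l0 x)]⟩
  have hrhs :
      BddAbove (Set.range fun l : Fin (d + 1) => gaugeNorm (l : ℕ) y - ((l : ℕ) : ℝ)) :=
    (Set.finite_range _).bddAbove
  refine le_antisymm (ciSup_le fun x => ?_) (ciSup_le fun l => ?_)
  · calc capra x y - l0 x ≤ gaugeNorm (l0 x) y - l0 x := by
          linarith [capra_le_gaugeNorm_l0 x y]
      _ ≤ _ := le_ciSup hrhs (⟨l0 x, Nat.lt_succ_of_le (l0_le x)⟩ : Fin (d + 1))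
  · rw [sub_le_iff_le_add]
    refine gaugeNorm_le y fun K hK => ?_
    have hl0 : (l0 (restr K y) : ℝ) ≤ (l : ℕ) := by
      exact_mod_cast (l0_restr_le_card K y).trans hK
    have hle := le_ciSup hlhs (restr K y)
    rw [capra_restr_self] at hle
    linarith

/-- the Capra conjugate of the ℓ₀ pseudonorm:
`sup_x (¢(x,y) − ℓ₀(x)) = max_{0 ≤ l ≤ d} (‖y‖_(l) − l)`. -/
theorem capra_conjugate_l0 (d : ℕ) (hd : 1 ≤ d) (y : EuclideanSpace ℝ (Fin d)) :
    (⨆ x : EuclideanSpace ℝ (Fin d), (capra x y - (l0 x : ℝ))) =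
      ⨆ l : Fin (d + 1), (gaugeNorm (l : ℕ) y - ((l : ℕ) : ℝ)) :=
  capra_conjugate_l0_general d y
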